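/- Let X ⊆ 𝒜^{ℤ^d} be a subshift, f ∈ SV_d(X), and Λ ⊆ ℤ^d a nonempty finite set, with γ_Λ as defined. Then: (a) for each x ∈ X, γ_Λ(·|x) is a Borel probability measure on X; (b) for each Borel set A ⊆ X, the function x ↦ γ_Λ(A|x) is 𝓕_{Λ^c}-measurable; (c) for every B ∈ 𝓕_{Λ^c} and every x ∈ X, γ_Λ(B|x) = 1_B(x). -/

import Mathlib

open MeasureTheory Filter Topology

/-- The full shift configuration space `𝒜^{ℤ^d}`. -/
abbrev Config (d : ℕ) (A : Type*) := (Fin d → ℤ) → A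

/-- The shift action of `ℤ^d`: `(T^k x)_i = x_{i+k}`. -/
def shift {d : ℕ} {A : Type*} (k : Fin d → ℤ) (x : Config d A) : Config d A :=
  fun i => x (i + k)

/-- The ℓ∞ norm of a lattice point, `‖k‖_∞ = max_i |k_i|`. -/
def normInf {d : ℕ} (k : Fin d → ℤ) : ℕ :=
  Finset.univ.sup fun i => (k i).natAbs

/-- The box `Λ_N = {k : ‖k‖_∞ ≤ N}` as a finset. -/
noncomputable def boxF (d N : ℕ) : Finset (Fin d → ℤ) :=
  Finset.Icc (fun _ => -(N : ℤ)) (fun _ => (N : ℤ))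

/-- The `n`-th variation of `f` on a subshift `X`:
`δ_n(f) = sup {|f x - f y| : x, y ∈ X, x_{Λ_n} = y_{Λ_n}}`. -/
noncomputable def deltaVar {d : ℕ} {A : Type*} (X : Set (Config d A))
    (f : Config d A → ℝ) (n : ℕ) : ℝ :=
  sSup {r : ℝ | ∃ x ∈ X, ∃ y ∈ X,
    (∀ k : Fin d → ℤ, normInf k ≤ n → x k = y k) ∧ r = |f x - f y|}

/-- `f` is bounded on `X`. -/
def BoundedOn {d : ℕ} {A : Type*} (X : Set (Config d A)) (f : Config d A → ℝ) : Prop :=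
  ∃ C : ℝ, ∀ x ∈ X, |f x| ≤ C

/-- Membership in `SV_d(X)`: bounded with `Σ_{n ≥ 1} n^{d-1} δ_n(f) < ∞`. -/
def MemSV (d : ℕ) {A : Type*} (X : Set (Config d A)) (f : Config d A → ℝ) : Prop :=
  BoundedOn X f ∧ Summable fun n : ℕ => ((n : ℝ) + 1) ^ (d - 1) * deltaVar X f (n + 1)

/-- The sup norm of `f` over `X`. -/
noncomputable def supNormOn {d : ℕ} {A : Type*} (X : Set (Config d A))
    (f : Config d A → ℝ) : ℝ :=
  sSup {r : ℝ | ∃ x ∈ X, r = |f x|}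

/-- The `SV_d` norm: `‖f‖_{SV_d} = ‖f‖_∞ + Σ_{n ≥ 1} n^{d-1} δ_n(f)`. -/
noncomputable def svNorm (d : ℕ) {A : Type*} (X : Set (Config d A))
    (f : Config d A → ℝ) : ℝ :=
  supNormOn X f + ∑' n : ℕ, ((n : ℝ) + 1) ^ (d - 1) * deltaVar X f (n + 1)

/-- The Gibbs relation `𝔗`: pairs of points of `X` that agree outside a finite set. -/
def gibbsRel {d : ℕ} {A : Type*} (X : Set (Config d A)) :
    Set (Config d A × Config d A) :=
  {p | p.1 ∈ X ∧ p.2 ∈ X ∧ ∃ Λ : Finset (Fin d → ℤ), ∀ k ∉ Λ, p.1 k = p.2 k}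

/-- The cocycle `φ_f(x,y) = Σ_{k ∈ ℤ^d} (f(T^k y) - f(T^k x))` (unordered sum). -/
noncomputable def phiF {d : ℕ} {A : Type*} (f : Config d A → ℝ)
    (x y : Config d A) : ℝ :=
  ∑' k : Fin d → ℤ, (f (shift k y) - f (shift k x))

/-- Membership in `𝓕(X)`: homeomorphisms of `X` changing only finitely many coordinates,
uniformly. -/
def memF {d : ℕ} {A : Type*} [TopologicalSpace A] (X : Set (Config d A))
    (φ : ↥X ≃ₜ ↥X) : Prop :=
  ∃ n : ℕ, 1 ≤ n ∧ ∀ x : ↥X, ∀ k : Fin d → ℤ, n < normInf k → (φ x).1 k = x.1 k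

/-- `𝓕_n(X)`. -/
def Fn {d : ℕ} {A : Type*} [TopologicalSpace A] (X : Set (Config d A)) (n : ℕ) :
    Set (↥X ≃ₜ ↥X) :=
  {φ | (∀ x : ↥X, ∀ k : Fin d → ℤ, n < normInf k → (φ x).1 k = x.1 k) ∧
    ∀ x y : ↥X,
      ((∀ k : Fin d → ℤ, normInf k ≤ n → x.1 k = y.1 k) ↔
        (∀ k : Fin d → ℤ, normInf k ≤ n → (φ x).1 k = (φ y).1 k))}

/-- The configuration `ω x_{Λ^c}`: equal to `ω` on `Λ` and to `x` off `Λ`. -/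
def patch {d : ℕ} {A : Type*} (Λ : Finset (Fin d → ℤ)) (ω : {k // k ∈ Λ} → A)
    (x : Config d A) : Config d A :=
  fun k => if h : k ∈ Λ then ω ⟨k, h⟩ else x k

/-- `f_n = Σ_{i ∈ Λ_n} f ∘ T^i`. -/
noncomputable def fnSum (d : ℕ) {A : Type*} (f : Config d A → ℝ) (n : ℕ)
    (z : Config d A) : ℝ :=
  ∑ i ∈ boxF d n, f (shift i z)

/-- The σ-algebra `𝓕_Δ` on `X`, generated by the coordinate projections `x ↦ x_i`, `i ∈ Δ`. -/
def cylSigma {d : ℕ} {A : Type*} [MeasurableSpace A] (X : Set (Config d A))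
    (Δ : Set (Fin d → ℤ)) : MeasurableSpace ↥X :=
  MeasurableSpace.comap (fun (x : ↥X) (i : ↥Δ) => x.1 i.1) MeasurableSpace.pi

/-- `μ` is a Gibbs measure for `f`: `(φ_f, 𝔗)`-conformal. -/
def IsGibbs (d : ℕ) {A : Type*} [MeasurableSpace A] (X : Set (Config d A))
    (f : Config d A → ℝ) (μ : Measure ↥X) : Prop :=
  ∀ V W : ↥X → ↥X, Measurable V → Measurable W →
    (∀ x, W (V x) = x) → (∀ x, V (W x) = x) →
    (∀ x : ↥X, ((x.1, (V x).1) ∈ gibbsRel X)) →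
    (Measure.map V μ ≪ μ ∧
      ∀ᵐ x ∂μ, (Measure.map V μ).rnDeriv μ x
        = ENNReal.ofReal (Real.exp (phiF f x.1 (W x).1)))

/-- `μ` is a topological Gibbs measure for `f`: `(φ_f|_{𝔗⁰}, 𝔗⁰)`-conformal. -/
def IsTopGibbs (d : ℕ) {A : Type*} [TopologicalSpace A] [MeasurableSpace A]
    (X : Set (Config d A)) (f : Config d A → ℝ) (μ : Measure ↥X) : Prop :=
  ∀ φ : ↥X ≃ₜ ↥X, memF X φ →
    (Measure.map (⇑φ) μ ≪ μ ∧
      ∀ᵐ x ∂μ, (Measure.map (⇑φ) μ).rnDeriv μ x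
        = ENNReal.ofReal (Real.exp (phiF f x.1 (φ.symm x).1)))

/-- Finite-volume Gibbsian ratios defining the kernel `γ_Λ`. -/
noncomputable def gammaFn (d : ℕ) {A : Type*} [Fintype A] (X : Set (Config d A))
    (f : Config d A → ℝ) (Λ : Finset (Fin d → ℤ)) (S : Set ↥X) (x : Config d A)
    (n : ℕ) : ℝ :=
  (∑ ω : {k // k ∈ Λ} → A,
      (Subtype.val '' S).indicator (fun z => Real.exp (fnSum d f n z)) (patch Λ ω x)) /
  (∑ η : {k // k ∈ Λ} → A,
      X.indicator (fun z => Real.exp (fnSum d f n z)) (patch Λ η x))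

/-- The kernel `γ_Λ(S | x)`, defined as the limit of the finite-volume ratios. -/
noncomputable def gamma (d : ℕ) {A : Type*} [Fintype A] (X : Set (Config d A))
    (f : Config d A → ℝ) (Λ : Finset (Fin d → ℤ)) (S : Set ↥X) (x : Config d A) : ℝ :=
  limUnder atTop (gammaFn d X f Λ S x)

/-- `X` is a subshift of finite type. -/
def IsSFT {d : ℕ} {A : Type*} (X : Set (Config d A)) : Prop :=
  ∃ n : ℕ, 1 ≤ n ∧ ∃ F : Set ({k : Fin d → ℤ // normInf k ≤ n} → A),
    X = {x : Config d A |
      ∀ l : Fin d → ℤ, (fun k : {k : Fin d → ℤ // normInf k ≤ n} => shift l x k.1) ∉ F}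

/-- The topological Gibbs relation `𝔗⁰`. -/
def topGibbsRel {d : ℕ} {A : Type*} [TopologicalSpace A] (X : Set (Config d A)) :
    Set (Config d A × Config d A) :=
  {p | ∃ (hx : p.1 ∈ X) (φ : ↥X ≃ₜ ↥X), memF X φ ∧ (φ ⟨p.1, hx⟩).1 = p.2}

/-- `f` is a local function on `X`. -/
def IsLocal {d : ℕ} {A : Type*} (X : Set (Config d A)) (f : Config d A → ℝ) : Prop :=
  ∃ Λ : Finset (Fin d → ℤ), ∀ x ∈ X, ∀ y ∈ X, (∀ k ∈ Λ, x k = y k) → f x = f y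

/-!
If `z₁, z₂ ∈ X` differ only inside the box `Λ_R`, the terms of `Σ_i (f(T^i z₁) - f(T^i z₂))`
with `‖i‖_∞ = R + 1 + n` are bounded by `δ_n(f)`, and there are `O(n^{d-1})` of them, so the
`SV_d` condition makes the series converge absolutely. Dividing numerator and denominator of the
ratios defining `γ_Λ(·|x)` by `exp f_n(x)` therefore shows that they converge to the normalised
weights `exp φ_f(x, ω x_{Λᶜ})` of the finitely many configurations `ω x_{Λᶜ} ∈ X`: a probability
measure. Each ratio depends on `x` only off `Λ`, and is measurable since `f` is continuous on `X`;
and a set in `𝓕_{Λᶜ}` contains either all or none of the points `ω x_{Λᶜ}`.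
-/

section Lattice

variable {d : ℕ}

open Finset

lemma normInf_le_iff {k : Fin d → ℤ} {n : ℕ} : normInf k ≤ n ↔ ∀ j, (k j).natAbs ≤ n := by
  simp [normInf, Finset.sup_le_iff]

lemma mem_boxF {i : Fin d → ℤ} {n : ℕ} : i ∈ boxF d n ↔ normInf i ≤ n := by
  simp only [boxF, Finset.mem_Icc, normInf_le_iff, Pi.le_def, ← forall_and]
  refine forall_congr' fun j => ?_
  rw [← Int.ofNat_le, Int.natCast_natAbs, abs_le]

lemma boxF_mono : Monotone (boxF d) :=
  fun _ _ hmn _ hi => mem_boxF.2 ((mem_boxF.1 hi).trans hmn)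

lemma tendsto_boxF_atTop : Tendsto (boxF d) atTop atTop :=
  tendsto_atTop_finset_of_monotone boxF_mono fun i => ⟨normInf i, mem_boxF.2 le_rfl⟩

lemma card_boxF (n : ℕ) : #(boxF d n) = (2 * n + 1) ^ d := by
  simp only [boxF, Pi.card_Icc, Int.card_Icc, Finset.prod_const, Finset.card_univ,
    Fintype.card_fin]
  congr 1
  omega

lemma normInf_le_normInf_add_normInf (k i : Fin d → ℤ) :
    normInf i ≤ normInf (k + i) + normInf k := by
  refine normInf_le_iff.2 fun j => ?_
  calc (i j).natAbs = ((k + i) j + -k j).natAbs := by simp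
    _ ≤ ((k + i) j).natAbs + (-k j).natAbs := Int.natAbs_add_le _ _
    _ ≤ normInf (k + i) + normInf k := by
      rw [Int.natAbs_neg]
      exact add_le_add (normInf_le_iff.1 le_rfl j) (normInf_le_iff.1 le_rfl j)

lemma card_filter_normInf_eq_le (s : Finset (Fin d → ℤ)) (m : ℕ) :
    #{i ∈ s | normInf i = m} ≤ (2 * d + 1) * 2 ^ d * (m + 1) ^ (d - 1) := by
  rcases m with _ | k
  · calc #{i ∈ s | normInf i = 0} ≤ #(boxF d 0) :=
          card_le_card fun i hi => mem_boxF.2 (mem_filter.1 hi).2.le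
      _ = 1 := by simp [card_boxF]
      _ ≤ (2 * d + 1) * 2 ^ d * (0 + 1) ^ (d - 1) := by
          simp only [zero_add, one_pow, mul_one]
          exact Nat.one_le_iff_ne_zero.2 (by positivity)
  · have hsub : {i ∈ s | normInf i = k + 1} ⊆ boxF d (k + 1) \ boxF d k := fun i hi => by
      simp only [mem_filter] at hi
      simp [mem_boxF, hi.2]
    have hshell :
        (2 * (k + 1) + 1) ^ d - (2 * k + 1) ^ d ≤ 2 * d * (2 * (k + 1) + 1) ^ (d - 1) := by
      have hle : (2 * k + 1) ^ d ≤ (2 * (k + 1) + 1) ^ d := Nat.pow_le_pow_left (by omega) d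
      have := abs_pow_sub_pow_le (α := ℤ) (2 * (k + 1) + 1) (2 * k + 1) d
      zify [hle]
      grind
    calc #{i ∈ s | normInf i = k + 1} ≤ #(boxF d (k + 1) \ boxF d k) := card_le_card hsub
      _ = (2 * (k + 1) + 1) ^ d - (2 * k + 1) ^ d := by
          rw [card_sdiff_of_subset (boxF_mono (Nat.le_succ k)), card_boxF, card_boxF]
      _ ≤ 2 * d * (2 * (k + 1 + 1)) ^ (d - 1) := hshell.trans (by gcongr; omega)
      _ = 2 * d * 2 ^ (d - 1) * (k + 1 + 1) ^ (d - 1) := by rw [mul_pow]; ring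
      _ ≤ (2 * d + 1) * 2 ^ d * (k + 1 + 1) ^ (d - 1) := by
          gcongr
          · omega
          · norm_num
          · omega

lemma summable_comp_normInf {g : ℕ → ℝ} (hg : 0 ≤ g)
    (hsum : Summable fun m : ℕ => ((m : ℝ) + 1) ^ (d - 1) * g m) :
    Summable fun i : Fin d → ℤ => g (normInf i) := by
  classical
  let K : ℝ := (2 * d + 1) * 2 ^ d
  have hcard (u : Finset (Fin d → ℤ)) (m : ℕ) :
      (#{i ∈ u | normInf i = m} : ℝ) ≤ K * ((m : ℝ) + 1) ^ (d - 1) := by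
    simp only [K]
    exact_mod_cast card_filter_normInf_eq_le u m
  refine summable_of_sum_le (c := K * ∑' m : ℕ, ((m : ℝ) + 1) ^ (d - 1) * g m)
    (fun i => hg _) fun u => ?_
  calc ∑ i ∈ u, g (normInf i) = ∑ m ∈ u.image normInf, #{i ∈ u | normInf i = m} • g m :=
        Finset.sum_comp g normInf
    _ ≤ ∑ m ∈ u.image normInf, K * ((((m : ℕ) : ℝ) + 1) ^ (d - 1) * g m) := by
        gcongr with m
        rw [nsmul_eq_mul, ← mul_assoc]
        exact mul_le_mul_of_nonneg_right (hcard u m) (hg m)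
    _ = K * ∑ m ∈ u.image normInf, (((m : ℕ) : ℝ) + 1) ^ (d - 1) * g m := (mul_sum ..).symm
    _ ≤ K * ∑' m : ℕ, ((m : ℝ) + 1) ^ (d - 1) * g m := by
        gcongr
        exact hsum.sum_le_tsum _ fun m _ => mul_nonneg (by positivity) (hg m)

end Lattice

section Variation

variable {d : ℕ} {A : Type*} {X : Set (Config d A)} {f : Config d A → ℝ}

lemma deltaVar_nonneg (n : ℕ) : 0 ≤ deltaVar X f n :=
  Real.sSup_nonneg fun _ ⟨_, _, _, _, _, hr⟩ => hr ▸ abs_nonneg _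

lemma abs_sub_le_deltaVar (hf : BoundedOn X f) {n : ℕ} {x y : Config d A} (hx : x ∈ X)
    (hy : y ∈ X) (hxy : ∀ k : Fin d → ℤ, normInf k ≤ n → x k = y k) :
    |f x - f y| ≤ deltaVar X f n := by
  obtain ⟨C, hC⟩ := hf
  refine le_csSup ⟨2 * C, ?_⟩ ⟨x, hx, y, hy, hxy, rfl⟩
  rintro _ ⟨x, hx, y, hy, -, rfl⟩
  linarith [abs_sub (f x) (f y), hC x hx, hC y hy]

lemma tendsto_deltaVar_atTop (hf : MemSV d X f) : Tendsto (deltaVar X f) atTop (𝓝 0) := by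
  refine (tendsto_add_atTop_iff_nat 1).1 <| squeeze_zero (fun n => deltaVar_nonneg _)
    (fun n => ?_) hf.2.tendsto_atTop_zero
  exact le_mul_of_one_le_left (deltaVar_nonneg _)
    (one_le_pow₀ (by linarith [n.cast_nonneg (α := ℝ)]))

lemma continuousOn_of_memSV [TopologicalSpace A] [DiscreteTopology A] (hf : MemSV d X f) :
    ContinuousOn f X := by
  intro x hx
  rw [ContinuousWithinAt, Metric.tendsto_nhds]
  intro ε hε
  obtain ⟨m, hm⟩ := ((tendsto_deltaVar_atTop hf).eventually (gt_mem_nhds hε)).exists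
  have hcyl : {y : Config d A | ∀ k ∈ boxF d m, y k = x k} ∈ 𝓝 x := by
    simp only [Set.ofPred_forall]
    exact (biInter_finset_mem _).2 fun k _ =>
      (continuous_apply k).continuousAt (isOpen_discrete {x k} |>.mem_nhds rfl)
  filter_upwards [mem_nhdsWithin_of_mem_nhds hcyl, self_mem_nhdsWithin] with y hyx hy
  rw [Real.dist_eq]
  exact (abs_sub_le_deltaVar hf.1 hy hx fun k hk => hyx k (mem_boxF.2 hk)).trans_lt hm

end Variation

section Cocycle

variable {d : ℕ} {A : Type*} {X : Set (Config d A)} {f : Config d A → ℝ}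

lemma abs_sub_shift_le_deltaVar (hf : BoundedOn X f)
    (hinv : ∀ k : Fin d → ℤ, ∀ x ∈ X, shift k x ∈ X) {R n : ℕ} {z₁ z₂ : Config d A}
    (h₁ : z₁ ∈ X) (h₂ : z₂ ∈ X) (hagree : ∀ k, R < normInf k → z₁ k = z₂ k)
    {i : Fin d → ℤ} (hi : R + n < normInf i) :
    |f (shift i z₁) - f (shift i z₂)| ≤ deltaVar X f n :=
  abs_sub_le_deltaVar hf (hinv i _ h₁) (hinv i _ h₂) fun k hk =>
    hagree (k + i) (by have := normInf_le_normInf_add_normInf k i; omega)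

lemma summable_shift_sub (hf : MemSV d X f)
    (hinv : ∀ k : Fin d → ℤ, ∀ x ∈ X, shift k x ∈ X) {Λ : Finset (Fin d → ℤ)}
    {z₁ z₂ : Config d A} (h₁ : z₁ ∈ X) (h₂ : z₂ ∈ X) (hagree : ∀ k ∉ Λ, z₁ k = z₂ k) :
    Summable fun i : Fin d → ℤ => f (shift i z₁) - f (shift i z₂) := by
  obtain ⟨C, hC⟩ := hf.1
  set R := Λ.sup normInf
  have hagree' : ∀ k, R < normInf k → z₁ k = z₂ k := fun k hk =>
    hagree k fun hkΛ => hk.not_ge (Finset.le_sup hkΛ)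
  let g : ℕ → ℝ := fun m => if m ≤ R + 1 then 2 * C else deltaVar X f (m - (R + 1))
  have hg : 0 ≤ g := fun m => by
    by_cases hm : m ≤ R + 1
    · simp only [g, if_pos hm, Pi.zero_apply]; linarith [(abs_nonneg _).trans (hC _ h₁)]
    · simp only [g, if_neg hm, Pi.zero_apply]; exact deltaVar_nonneg _
  have hbound : ∀ i, ‖f (shift i z₁) - f (shift i z₂)‖ ≤ g (normInf i) := fun i => by
    by_cases hi : normInf i ≤ R + 1
    · simp only [g, if_pos hi, Real.norm_eq_abs]
      linarith [abs_sub (f (shift i z₁)) (f (shift i z₂)), hC _ (hinv i _ h₁), hC _ (hinv i _ h₂)]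
    · simp only [g, if_neg hi, Real.norm_eq_abs]
      exact abs_sub_shift_le_deltaVar hf.1 hinv h₁ h₂ hagree' (by omega)
  refine Summable.of_norm_bounded (summable_comp_normInf hg ?_) hbound
  rw [← summable_nat_add_iff (R + 2)]
  refine Summable.of_nonneg_of_le (fun n => mul_nonneg (by positivity) (hg _)) (fun n => ?_)
    (hf.2.mul_left (((R : ℝ) + 3) ^ (d - 1)))
  have hg_eq : g (n + (R + 2)) = deltaVar X f (n + 1) := by
    simp only [g, if_neg (show ¬ n + (R + 2) ≤ R + 1 by omega)]
    congr 1
    omega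
  rw [hg_eq, ← mul_assoc, ← mul_pow]
  gcongr
  · exact deltaVar_nonneg _
  · push_cast
    nlinarith [n.cast_nonneg (α := ℝ), R.cast_nonneg (α := ℝ)]

lemma tendsto_fnSum_sub (hf : MemSV d X f)
    (hinv : ∀ k : Fin d → ℤ, ∀ x ∈ X, shift k x ∈ X) {Λ : Finset (Fin d → ℤ)}
    {z₁ z₂ : Config d A} (h₁ : z₁ ∈ X) (h₂ : z₂ ∈ X) (hagree : ∀ k ∉ Λ, z₁ k = z₂ k) :
    Tendsto (fun n => fnSum d f n z₁ - fnSum d f n z₂) atTop (𝓝 (phiF f z₂ z₁)) := by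
  simpa only [fnSum, phiF, ← Finset.sum_sub_distrib, Function.comp_def] using
    (summable_shift_sub hf hinv h₁ h₂ hagree).hasSum.comp tendsto_boxF_atTop

end Cocycle

section Kernel

variable {d : ℕ} {A : Type*} {X : Set (Config d A)} {f : Config d A → ℝ}
  {Λ : Finset (Fin d → ℤ)} {x : Config d A}

lemma patch_of_notMem (ω : {k // k ∈ Λ} → A) (x : Config d A) {k : Fin d → ℤ} (hk : k ∉ Λ) :
    patch Λ ω x k = x k :=
  dif_neg hk

lemma patch_restrict (Λ : Finset (Fin d → ℤ)) (x : Config d A) :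
    patch Λ (fun k => x k.1) x = x := by
  funext k
  by_cases hk : k ∈ Λ <;> simp [patch, hk]

variable [Fintype A]

noncomputable def patchSum (Λ : Finset (Fin d → ℤ)) (T : Set (Config d A))
    (g : Config d A → ℝ) (x : Config d A) : ℝ :=
  ∑ ω : {k // k ∈ Λ} → A, T.indicator g (patch Λ ω x)

lemma gammaFn_eq_div (S : Set ↥X) (n : ℕ) :
    gammaFn d X f Λ S x n = patchSum Λ (Subtype.val '' S) (fun z => Real.exp (fnSum d f n z)) x /
      patchSum Λ X (fun z => Real.exp (fnSum d f n z)) x :=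
  rfl

lemma patchSum_pos {T : Set (Config d A)} {g : Config d A → ℝ} (hg : ∀ z, 0 < g z)
    (hx : x ∈ T) : 0 < patchSum Λ T g x := by
  refine Finset.sum_pos' (fun ω _ => Set.indicator_nonneg (fun z _ => (hg z).le) _)
    ⟨fun k => x k.1, Finset.mem_univ _, ?_⟩
  rw [patch_restrict, Set.indicator_of_mem hx]
  exact hg x

lemma tendsto_patchSum_mul_exp (hf : MemSV d X f)
    (hinv : ∀ k : Fin d → ℤ, ∀ x ∈ X, shift k x ∈ X) {T : Set (Config d A)} (hT : T ⊆ X)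
    (hx : x ∈ X) :
    Tendsto (fun n => patchSum Λ T (fun z => Real.exp (fnSum d f n z)) x *
        Real.exp (-fnSum d f n x)) atTop
      (𝓝 (patchSum Λ T (fun z => Real.exp (phiF f x z)) x)) := by
  simp only [patchSum, Finset.sum_mul]
  refine tendsto_finsetSum _ fun ω _ => ?_
  by_cases hω : patch Λ ω x ∈ T
  · simp only [Set.indicator_of_mem hω, ← Real.exp_add, ← sub_eq_add_neg]
    exact (Real.continuous_exp.tendsto _).comp
      (tendsto_fnSum_sub hf hinv (hT hω) hx fun k hk => patch_of_notMem ω x hk)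
  · simp only [Set.indicator_of_notMem hω, zero_mul, tendsto_const_nhds]

lemma tendsto_gammaFn (hf : MemSV d X f) (hinv : ∀ k : Fin d → ℤ, ∀ x ∈ X, shift k x ∈ X)
    (S : Set ↥X) (hx : x ∈ X) :
    Tendsto (gammaFn d X f Λ S x) atTop
      (𝓝 (patchSum Λ (Subtype.val '' S) (fun z => Real.exp (phiF f x z)) x /
        patchSum Λ X (fun z => Real.exp (phiF f x z)) x)) := by
  refine ((tendsto_patchSum_mul_exp hf hinv (Subtype.coe_image_subset X S) hx).div
    (tendsto_patchSum_mul_exp hf hinv subset_rfl hx)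
    (patchSum_pos (fun _ => Real.exp_pos _) hx).ne').congr fun n => ?_
  exact mul_div_mul_right _ _ (Real.exp_ne_zero _)

lemma gamma_eq_div (hf : MemSV d X f) (hinv : ∀ k : Fin d → ℤ, ∀ x ∈ X, shift k x ∈ X)
    (S : Set ↥X) (hx : x ∈ X) :
    gamma d X f Λ S x = patchSum Λ (Subtype.val '' S) (fun z => Real.exp (phiF f x z)) x /
      patchSum Λ X (fun z => Real.exp (phiF f x z)) x :=
  (tendsto_gammaFn hf hinv S hx).limUnder_eq

lemma tendsto_gammaFn_gamma (hf : MemSV d X f)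
    (hinv : ∀ k : Fin d → ℤ, ∀ x ∈ X, shift k x ∈ X) (S : Set ↥X) (hx : x ∈ X) :
    Tendsto (gammaFn d X f Λ S x) atTop (𝓝 (gamma d X f Λ S x)) :=
  gamma_eq_div hf hinv S hx ▸ tendsto_gammaFn hf hinv S hx

end Kernel

section Measure

variable {d : ℕ} {A : Type*} [Fintype A] [MeasurableSpace A] {X : Set (Config d A)}
  {f : Config d A → ℝ} {Λ : Finset (Fin d → ℤ)} {x : Config d A}

noncomputable def patchMeasure (Λ : Finset (Fin d → ℤ)) (g : Config d A → ℝ) (x : Config d A) :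
    Measure (Config d A) :=
  ∑ ω : {k // k ∈ Λ} → A, ENNReal.ofReal (g (patch Λ ω x)) • Measure.dirac (patch Λ ω x)

lemma toReal_patchMeasure_apply {g : Config d A → ℝ} (hg : ∀ z, 0 ≤ g z)
    {T : Set (Config d A)} (hT : MeasurableSet T) :
    (patchMeasure Λ g x T).toReal = patchSum Λ T g x := by
  rw [patchMeasure, Measure.finsetSum_apply, ENNReal.toReal_sum]
  · refine Finset.sum_congr rfl fun ω _ => ?_
    by_cases hω : patch Λ ω x ∈ T <;>
      simp [Measure.dirac_apply' _ hT, hω, hg]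
  · intro ω _
    by_cases hω : patch Λ ω x ∈ T <;> simp [Measure.dirac_apply' _ hT, hω]

lemma exists_isProbabilityMeasure_gamma (hX : MeasurableSet X) (hf : MemSV d X f)
    (hinv : ∀ k : Fin d → ℤ, ∀ x ∈ X, shift k x ∈ X) (hx : x ∈ X) :
    ∃ ν : Measure ↥X, IsProbabilityMeasure ν ∧
      ∀ S : Set ↥X, MeasurableSet S → (ν S).toReal = gamma d X f Λ S x := by
  set μ := patchMeasure Λ (fun z => Real.exp (phiF f x z)) x
  have hμ : ∀ T, MeasurableSet T → (μ T).toReal = patchSum Λ T (fun z => Real.exp (phiF f x z)) x :=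
    fun T hT => toReal_patchMeasure_apply (fun _ => (Real.exp_pos _).le) hT
  obtain ⟨hμX₀, hμX⟩ := ENNReal.toReal_pos_iff.1 <|
    (hμ X hX).symm ▸ patchSum_pos (fun _ => Real.exp_pos _) hx
  have hemb := MeasurableEmbedding.subtype_coe hX
  refine ⟨(μ X)⁻¹ • μ.comap Subtype.val, ⟨?_⟩, fun S hS => ?_⟩
  · rw [Measure.smul_apply, hemb.comap_apply, Set.image_univ, Subtype.range_coe, smul_eq_mul,
      ENNReal.inv_mul_cancel hμX₀.ne' hμX.ne]
  · rw [Measure.smul_apply, hemb.comap_apply, smul_eq_mul, ENNReal.toReal_mul, ENNReal.toReal_inv,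
      hμ _ (hemb.measurableSet_image' hS), hμ X hX, gamma_eq_div hf hinv S hx, inv_mul_eq_div]

end Measure

section Measurability

variable {d : ℕ} {A : Type*} [MeasurableSpace A] {X : Set (Config d A)}
  {f : Config d A → ℝ} {Λ : Finset (Fin d → ℤ)}

lemma measurable_patch (ω : {k // k ∈ Λ} → A) :
    Measurable[cylSigma X ((↑Λ : Set (Fin d → ℤ))ᶜ)] fun y : ↥X => patch Λ ω y.1 := by
  refine @measurable_pi_lambda _ _ _ (cylSigma X _) _ _ fun k => ?_
  by_cases hk : k ∈ Λ
  · simp only [patch, dif_pos hk]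
    exact measurable_const
  · simp only [patch, dif_neg hk]
    exact (measurable_pi_apply (X := fun _ : ↥((↑Λ : Set (Fin d → ℤ))ᶜ) => A) ⟨k, hk⟩).comp
      (comap_measurable _)

lemma measurable_indicator_exp_fnSum [Countable A] [TopologicalSpace A] [DiscreteTopology A]
    [BorelSpace A] (hf : MemSV d X f) (hinv : ∀ k : Fin d → ℤ, ∀ x ∈ X, shift k x ∈ X)
    {T : Set (Config d A)} (hT : MeasurableSet T) (hTX : T ⊆ X) (n : ℕ) :
    Measurable (T.indicator fun z => Real.exp (fnSum d f n z)) := by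
  classical
  have hcont : ContinuousOn (fun z => Real.exp (fnSum d f n z)) X :=
    Real.continuous_exp.comp_continuousOn <| continuousOn_finsetSum _ fun i _ =>
      (continuousOn_of_memSV hf).comp (continuous_pi fun k => continuous_apply (k + i)).continuousOn
        fun z hz => hinv i z hz
  rw [← Set.piecewise_eq_indicator]
  exact (hcont.mono hTX).measurable_piecewise continuousOn_const hT

variable [Fintype A]

lemma measurable_gamma [TopologicalSpace A] [DiscreteTopology A] [BorelSpace A]
    (hX : MeasurableSet X) (hf : MemSV d X f) (hinv : ∀ k : Fin d → ℤ, ∀ x ∈ X, shift k x ∈ X)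
    {S : Set ↥X} (hS : MeasurableSet S) :
    Measurable[cylSigma X ((↑Λ : Set (Fin d → ℤ))ᶜ)] fun y : ↥X => gamma d X f Λ S y.1 := by
  have hpatchSum : ∀ {T : Set (Config d A)}, MeasurableSet T → T ⊆ X → ∀ n,
      Measurable[cylSigma X ((↑Λ : Set (Fin d → ℤ))ᶜ)]
        fun y : ↥X => patchSum Λ T (fun z => Real.exp (fnSum d f n z)) y.1 :=
    fun hT hTX n => Finset.measurable_sum _ fun ω _ =>
      (measurable_indicator_exp_fnSum hf hinv hT hTX n).comp (measurable_patch ω)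
  exact @measurable_of_tendsto_metrizable _ _ (cylSigma X ((↑Λ : Set (Fin d → ℤ))ᶜ)) _ _ _ _ _ _
    (fun n => (hpatchSum (hX.subtype_image hS) (Subtype.coe_image_subset X S) n).div
      (hpatchSum hX subset_rfl n))
    (tendsto_pi_nhds.2 fun y => tendsto_gammaFn_gamma hf hinv S y.2)

end Measurability

section Proper

variable {d : ℕ} {A : Type*} [MeasurableSpace A] {X : Set (Config d A)}
  {f : Config d A → ℝ} {Λ : Finset (Fin d → ℤ)} {B : Set ↥X}

lemma mem_iff_of_eqOn_compl (hB : MeasurableSet[cylSigma X ((↑Λ : Set (Fin d → ℤ))ᶜ)] B)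
    {y y' : ↥X} (h : ∀ k ∉ Λ, y.1 k = y'.1 k) : y ∈ B ↔ y' ∈ B := by
  obtain ⟨M, -, rfl⟩ := hB
  have : (fun i : ↥((↑Λ : Set (Fin d → ℤ))ᶜ) => y.1 i.1) = fun i => y'.1 i.1 :=
    funext fun i => h i.1 i.2
  simp only [Set.mem_preimage, this]

lemma indicator_image_val_patch (hB : MeasurableSet[cylSigma X ((↑Λ : Set (Fin d → ℤ))ᶜ)] B)
    (y : ↥X) (g : Config d A → ℝ) (ω : {k // k ∈ Λ} → A) :
    (Subtype.val '' B).indicator g (patch Λ ω y.1) =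
      B.indicator (fun _ => X.indicator g (patch Λ ω y.1)) y := by
  by_cases hω : patch Λ ω y.1 ∈ X
  · have hmem : patch Λ ω y.1 ∈ Subtype.val '' B ↔ y ∈ B :=
      (Subtype.val_injective.mem_set_image (a := ⟨_, hω⟩)).trans
        (mem_iff_of_eqOn_compl hB fun k hk => patch_of_notMem ω y.1 hk)
    by_cases hy : y ∈ B
    · simp [Set.indicator_of_mem (hmem.2 hy), hy, hω]
    · simp [Set.indicator_of_notMem (mt hmem.1 hy), hy]
  · have hmem : patch Λ ω y.1 ∉ Subtype.val '' B := fun ⟨b, _, hb⟩ => hω (hb ▸ b.2)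
    simp [Set.indicator_of_notMem hmem, Set.indicator_of_notMem hω]

variable [Fintype A]

lemma gamma_eq_indicator (hB : MeasurableSet[cylSigma X ((↑Λ : Set (Fin d → ℤ))ᶜ)] B)
    (y : ↥X) : gamma d X f Λ B y.1 = B.indicator (fun _ => (1 : ℝ)) y := by
  have hconst : gammaFn d X f Λ B y.1 = fun _ => B.indicator (fun _ => (1 : ℝ)) y := by
    funext n
    rw [gammaFn_eq_div, patchSum]
    simp only [indicator_image_val_patch hB]
    by_cases hy : y ∈ B
    · simp only [Set.indicator_of_mem hy]
      exact div_self (patchSum_pos (fun _ => Real.exp_pos _) y.2).ne'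
    · simp [Set.indicator_of_notMem hy]
  rw [gamma, hconst]
  exact tendsto_const_nhds.limUnder_eq

end Proper

theorem gamma_proper_kernel_general {d : ℕ} {A : Type*} [Fintype A]
    [TopologicalSpace A] [DiscreteTopology A] [MeasurableSpace A] [BorelSpace A]
    (X : Set (Config d A)) (hcl : IsClosed X)
    (hinv : ∀ k : Fin d → ℤ, ∀ x ∈ X, shift k x ∈ X)
    (f : Config d A → ℝ) (hf : MemSV d X f)
    (Λ : Finset (Fin d → ℤ)) :
    (∀ x ∈ X, ∃ ν : Measure ↥X, IsProbabilityMeasure ν ∧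
        ∀ S : Set ↥X, MeasurableSet S → (ν S).toReal = gamma d X f Λ S x) ∧
    (∀ S : Set ↥X, MeasurableSet S →
        @Measurable ↥X ℝ (cylSigma X ((↑Λ : Set (Fin d → ℤ))ᶜ)) _
          (fun y : ↥X => gamma d X f Λ S y.1)) ∧
    (∀ B : Set ↥X, MeasurableSet[cylSigma X ((↑Λ : Set (Fin d → ℤ))ᶜ)] B →
        ∀ y : ↥X, gamma d X f Λ B y.1 = B.indicator (fun _ => (1 : ℝ)) y) :=
  ⟨fun _ hx => exists_isProbabilityMeasure_gamma hcl.measurableSet hf hinv hx,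
    fun _ hS => measurable_gamma hcl.measurableSet hf hinv hS,
    fun _ hB y => gamma_eq_indicator hB y⟩

/-- Properties of the kernels `γ_Λ`: (a) `γ_Λ(·|x)` is a Borel
probability measure on `X` for each `x ∈ X`; (b) `γ_Λ(S|·)` is `𝓕_{Λ^c}`-measurable;
(c) `γ_Λ(B|·) = 1_B` for every `B ∈ 𝓕_{Λ^c}`. -/
theorem gamma_proper_kernel {d : ℕ} (hd : 1 ≤ d) {A : Type*} [Fintype A] [Nonempty A]
    [TopologicalSpace A] [DiscreteTopology A] [MeasurableSpace A] [BorelSpace A]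
    (X : Set (Config d A)) (hne : X.Nonempty) (hcl : IsClosed X)
    (hinv : ∀ k : Fin d → ℤ, ∀ x ∈ X, shift k x ∈ X)
    (f : Config d A → ℝ) (hf : MemSV d X f)
    (Λ : Finset (Fin d → ℤ)) (hΛ : Λ.Nonempty) :
    (∀ x ∈ X, ∃ ν : Measure ↥X, IsProbabilityMeasure ν ∧
        ∀ S : Set ↥X, MeasurableSet S → (ν S).toReal = gamma d X f Λ S x) ∧
    (∀ S : Set ↥X, MeasurableSet S →
        @Measurable ↥X ℝ (cylSigma X ((↑Λ : Set (Fin d → ℤ))ᶜ)) _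
          (fun y : ↥X => gamma d X f Λ S y.1)) ∧
    (∀ B : Set ↥X, MeasurableSet[cylSigma X ((↑Λ : Set (Fin d → ℤ))ᶜ)] B →
        ∀ y : ↥X, gamma d X f Λ B y.1 = B.indicator (fun _ => (1 : ℝ)) y) :=
  gamma_proper_kernel_general X hcl hinv f hf Λ
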